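/- Every nonzero ideal I ⊆ k[X_1,...,X_m], for a fixed monomial order, has a Groebner basis; moreover any Groebner basis of I generates I. -/

import Mathlib

/-!
Existence: `k[X_1, …, X_n]` is Noetherian, so the ideal generated by the leading terms of the
nonzero elements of `I` is already generated by finitely many of them; their preimages form a
Groebner basis.

Spanning: divide `f ∈ I` by the nonzero elements of `G`. The remainder `r` lies in `I`, so if it
were nonzero its leading term would lie in the monomial ideal generated by the leading monomials
of `G`, i.e. the leading monomial of `r` would be divisible by one of them, which division rules
out. Hence `r = 0` and `f ∈ span G`.
-/

open MvPolynomial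

variable {σ K : Type*}

/-- The leading (multidegree) exponent of a polynomial with respect to a monomial order:
the maximum, for the order, of the exponents appearing in `f`. -/
noncomputable def leadExp [Field K] (m : MonomialOrder σ) (f : MvPolynomial σ K) :
    σ →₀ ℕ :=
  m.toSyn.symm (f.support.sup fun d => m.toSyn d)

/-- The leading term of a polynomial with respect to a monomial order. -/
noncomputable def leadTerm [Field K] (m : MonomialOrder σ) (f : MvPolynomial σ K) :
    MvPolynomial σ K :=
  monomial (leadExp m f) (f.coeff (leadExp m f))

/-- `G` is a Groebner basis of the ideal `I` for the monomial order `m`: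
a finite subset of `I` whose leading terms generate the same ideal as the leading
terms of all (nonzero) elements of `I`. -/
def IsGroebnerBasis [Field K] (m : MonomialOrder σ) (I : Ideal (MvPolynomial σ K))
    (G : Set (MvPolynomial σ K)) : Prop :=
  G.Finite ∧ G ⊆ (I : Set (MvPolynomial σ K)) ∧
    Ideal.span (leadTerm m '' G) =
      Ideal.span (leadTerm m '' {f | f ∈ I ∧ f ≠ 0})

/-- `r` is a remainder of `f` on division by `G` (relative to the ideal `I`):
`f - r ∈ I` and no monomial of `r` is divisible by the leading monomial of any
nonzero element of `G`. -/
def IsRemainder [Field K] (m : MonomialOrder σ) (I : Ideal (MvPolynomial σ K))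
    (G : Set (MvPolynomial σ K)) (f r : MvPolynomial σ K) : Prop :=
  f - r ∈ I ∧
    ∀ c ∈ r.support, ∀ g ∈ G, g ≠ 0 → ¬ leadExp m g ≤ c

section

variable [Field K] (m : MonomialOrder σ)

theorem leadExp_eq_degree (f : MvPolynomial σ K) : leadExp m f = m.degree f := rfl

theorem span_leadTerm_le_span_monomial (G : Set (MvPolynomial σ K)) :
    Ideal.span (leadTerm m '' G) ≤
      Ideal.span ((fun d => monomial d (1 : K)) '' (m.degree '' {g | g ∈ G ∧ g ≠ 0})) := by
  rw [Ideal.span_le]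
  rintro _ ⟨g, hg, rfl⟩
  by_cases hg0 : g = 0
  · simp [hg0, leadTerm]
  · have hlead : leadTerm m g = C (m.leadingCoeff g) * monomial (m.degree g) 1 := by
      rw [C_mul_monomial, mul_one]; rfl
    rw [hlead]
    exact Ideal.mul_mem_left _ _ (Ideal.subset_span ⟨_, ⟨g, ⟨hg, hg0⟩, rfl⟩, rfl⟩)

theorem exists_degree_le_of_mem_span_leadTerm {G : Set (MvPolynomial σ K)}
    {p : MvPolynomial σ K} (hp : p ∈ Ideal.span (leadTerm m '' G)) {c : σ →₀ ℕ}
    (hc : c ∈ p.support) : ∃ g ∈ G, g ≠ 0 ∧ m.degree g ≤ c := by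
  obtain ⟨_, ⟨g, ⟨hg, hg0⟩, rfl⟩, hle⟩ :=
    mem_ideal_span_monomial_image.mp (span_leadTerm_le_span_monomial m G hp) c hc
  exact ⟨g, hg, hg0, hle⟩

theorem degree_mem_support_leadTerm {f : MvPolynomial σ K} (hf : f ≠ 0) :
    m.degree f ∈ (leadTerm m f).support := by
  classical
  rw [mem_support_iff, leadTerm, leadExp_eq_degree, coeff_monomial, if_pos rfl]
  exact m.leadingCoeff_ne_zero_iff.mpr hf

theorem exists_isRemainder (G : Set (MvPolynomial σ K)) (f : MvPolynomial σ K) :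
    ∃ r, IsRemainder m (Ideal.span G) G f r := by
  obtain ⟨q, r, hf, -, hr⟩ := m.div_set (B := {g | g ∈ G ∧ g ≠ 0})
    (fun b hb => (m.leadingCoeff_ne_zero_iff.mpr hb.2).isUnit) f
  refine ⟨r, ?_, fun c hc g hg hg0 => hr c hc g ⟨hg, hg0⟩⟩
  rw [sub_eq_of_eq_add hf]
  exact Ideal.span_mono (Set.sep_subset _ _)
    ((Finsupp.mem_span_iff_linearCombination _ _ _).mpr ⟨q, rfl⟩)

theorem eq_zero_of_mem_of_not_degree_le {I : Ideal (MvPolynomial σ K)}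
    {G : Set (MvPolynomial σ K)}
    (hG : Ideal.span (leadTerm m '' G) = Ideal.span (leadTerm m '' {f | f ∈ I ∧ f ≠ 0}))
    {r : MvPolynomial σ K} (hrI : r ∈ I)
    (hr : ∀ c ∈ r.support, ∀ g ∈ G, g ≠ 0 → ¬ m.degree g ≤ c) : r = 0 := by
  by_contra hr0
  have hlead : leadTerm m r ∈ Ideal.span (leadTerm m '' G) :=
    hG ▸ Ideal.subset_span ⟨r, ⟨hrI, hr0⟩, rfl⟩
  obtain ⟨g, hg, hg0, hle⟩ :=
    exists_degree_le_of_mem_span_leadTerm m hlead (degree_mem_support_leadTerm m hr0)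
  exact hr _ ((m.degree_mem_support_iff r).mpr hr0) g hg hg0 hle

theorem span_eq_of_span_leadTerm_eq {I : Ideal (MvPolynomial σ K)}
    {G : Set (MvPolynomial σ K)} (hGI : G ⊆ I)
    (hG : Ideal.span (leadTerm m '' G) = Ideal.span (leadTerm m '' {f | f ∈ I ∧ f ≠ 0})) :
    Ideal.span G = I := by
  refine le_antisymm (Ideal.span_le.mpr hGI) fun f hf => ?_
  obtain ⟨r, hfr, hr⟩ := exists_isRemainder m G f
  have hrI : r ∈ I := by
    simpa using I.sub_mem hf (Ideal.span_le.mpr hGI hfr)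
  rwa [eq_zero_of_mem_of_not_degree_le m hG hrI hr, sub_zero] at hfr

theorem exists_isGroebnerBasis [Finite σ] (I : Ideal (MvPolynomial σ K)) :
    ∃ G, IsGroebnerBasis m I G := by
  obtain ⟨T, hTS, hT⟩ := (Submodule.fg_span_iff_fg_span_finset_subset
    (leadTerm m '' {f | f ∈ I ∧ f ≠ 0})).mp (IsNoetherian.noetherian (R := MvPolynomial σ K) _)
  obtain ⟨G, hGS, hGfin, hG⟩ := Set.exists_subset_image_finite_and
    (p := fun t => Ideal.span t = Ideal.span (leadTerm m '' {f | f ∈ I ∧ f ≠ 0})).mp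
    ⟨T, hTS, T.finite_toSet, hT.symm⟩
  exact ⟨G, hGfin, fun g hg => (hGS hg).1, hG⟩

end

theorem groebner_basis_exists_and_spans_general [Field K] {n : ℕ} (m : MonomialOrder (Fin n))
    (I : Ideal (MvPolynomial (Fin n) K)) :
    (∃ G : Set (MvPolynomial (Fin n) K), IsGroebnerBasis m I G) ∧
    (∀ G : Set (MvPolynomial (Fin n) K), IsGroebnerBasis m I G → Ideal.span G = I) :=
  ⟨exists_isGroebnerBasis m I, fun _ ⟨_, hGI, hG⟩ => span_eq_of_span_leadTerm_eq m hGI hG⟩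

/-- every nonzero ideal of `k[X_1,…,X_m]` has a Groebner basis, and any
Groebner basis of `I` generates `I`. -/
theorem groebner_basis_exists_and_spans [Field K] {n : ℕ} (m : MonomialOrder (Fin n))
    (I : Ideal (MvPolynomial (Fin n) K)) (hI : I ≠ ⊥) :
    (∃ G : Set (MvPolynomial (Fin n) K), IsGroebnerBasis m I G) ∧
    (∀ G : Set (MvPolynomial (Fin n) K), IsGroebnerBasis m I G → Ideal.span G = I) :=
  groebner_basis_exists_and_spans_general m I
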